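/- The extended Cygan spheres of radius 2/√3 centered at the boundary points (0, 0) and (−2 − (2/√3)i, 0) of the Heisenberg group intersect in exactly one point: their intersection, as subsets of ℂ × ℝ × ℝ≥0, equals the single point (−1 − (√3/3)i, 0, 0). In particular the two spheres are tangent at this point. -/

import Mathlib

/-!
On an extended Cygan sphere of squared radius `ρ` about `(c, 0)` the real part of the complex
number whose modulus is `ρ` is `|z - c|² + u`, so every point satisfies `|z - c|² + u ≤ ρ`.
The centers `0` and `c₁` are `2 · (2/√3)` apart, so by the parallelogram law these two
thickened discs share only `z = c₁/2`, `u = 0`; there `|z|² = ρ` already, which forces `t = 0`.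
-/

/-- Center of the isometric sphere I₁⁻ in Heisenberg coordinates. -/
noncomputable def c₁ : ℂ := -2 - ((2 / Real.sqrt 3 : ℝ) : ℂ) * Complex.I

open Complex ComplexConjugate

namespace Complex

lemma le_of_norm_ofReal_sub_mul_I_eq {x y ρ : ℝ} (h : ‖(x : ℂ) - y * I‖ = ρ) : x ≤ ρ := by
  simpa [h] using re_le_norm ((x : ℂ) - y * I)

lemma sq_norm_ofReal_sub_mul_I (x y : ℝ) : ‖(x : ℂ) - y * I‖ ^ 2 = x ^ 2 + y ^ 2 := by
  rw [sub_eq_add_neg, ← neg_mul, ← ofReal_neg, norm_add_mul_I, Real.sq_sqrt (by positivity),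
    neg_sq]

lemma eq_zero_of_norm_ofReal_sub_mul_I_eq {x y : ℝ} (h : ‖(x : ℂ) - y * I‖ = x) : y = 0 := by
  have := sq_norm_ofReal_sub_mul_I x y
  rw [h] at this
  exact pow_eq_zero_iff two_ne_zero |>.mp (by linarith)

lemma im_half_smul_mul_conj (c : ℂ) : ((2⁻¹ : ℝ) • c * conj c).im = 0 := by
  rw [smul_mul_assoc, mul_conj, smul_im, ofReal_im, smul_zero]

end Complex

section InnerProductSpace

variable {E : Type*} [NormedAddCommGroup E] [InnerProductSpace ℝ E]

lemma norm_sq_add_norm_sub_sq_eq (z c : E) :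
    ‖z‖ ^ 2 + ‖z - c‖ ^ 2 = 2 * ‖z - (2⁻¹ : ℝ) • c‖ ^ 2 + ‖c‖ ^ 2 / 2 := by
  have := parallelogram_law_with_norm ℝ (z - (2⁻¹ : ℝ) • c) ((2⁻¹ : ℝ) • c)
  rw [sub_add_cancel, sub_sub, ← add_smul, norm_smul] at this
  norm_num at this
  linarith

lemma norm_half_smul_sq (c : E) : ‖(2⁻¹ : ℝ) • c‖ ^ 2 = ‖c‖ ^ 2 / 4 := by
  rw [norm_smul]; norm_num; ring

lemma norm_half_smul_sub_sq (c : E) : ‖(2⁻¹ : ℝ) • c - c‖ ^ 2 = ‖c‖ ^ 2 / 4 := by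
  rw [← norm_half_smul_sq, ← norm_neg, neg_sub, show c - (2⁻¹ : ℝ) • c = (2⁻¹ : ℝ) • c by module]

lemma eq_half_smul_of_norm_sq_add_le {z c : E} {u ρ : ℝ} (hc : ‖c‖ ^ 2 = 4 * ρ) (hu : 0 ≤ u)
    (h₀ : ‖z‖ ^ 2 + u ≤ ρ) (h₁ : ‖z - c‖ ^ 2 + u ≤ ρ) : z = (2⁻¹ : ℝ) • c ∧ u = 0 := by
  have hsum := norm_sq_add_norm_sub_sq_eq z c
  have hmid : ‖z - (2⁻¹ : ℝ) • c‖ ^ 2 = 0 := by nlinarith [sq_nonneg ‖z - (2⁻¹ : ℝ) • c‖]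
  refine ⟨sub_eq_zero.mp (norm_eq_zero.mp (pow_eq_zero_iff two_ne_zero |>.mp hmid)), ?_⟩
  nlinarith [sq_nonneg ‖z - (2⁻¹ : ℝ) • c‖]

end InnerProductSpace

theorem cygan_spheres_inter_eq_singleton {c : ℂ} {ρ : ℝ} (hc : ‖c‖ ^ 2 = 4 * ρ) :
    {p : ℂ × ℝ × ℝ | 0 ≤ p.2.2 ∧ ‖((‖p.1‖ ^ 2 + p.2.2 : ℝ) : ℂ) - (p.2.1 : ℂ) * I‖ = ρ ∧
        ‖((‖p.1 - c‖ ^ 2 + p.2.2 : ℝ) : ℂ) - ((p.2.1 + 2 * (p.1 * conj c).im : ℝ) : ℂ) * I‖ = ρ}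
      = {((2⁻¹ : ℝ) • c, 0, 0)} := by
  have hρ : ‖c‖ ^ 2 / 4 = ρ := by rw [hc]; ring
  ext ⟨z, t, u⟩
  simp only [Set.mem_ofPred_eq, Set.mem_singleton_iff, Prod.mk.injEq]
  constructor
  · rintro ⟨hu, h₀, h₁⟩
    obtain ⟨rfl, rfl⟩ := eq_half_smul_of_norm_sq_add_le hc hu
      (le_of_norm_ofReal_sub_mul_I_eq h₀) (le_of_norm_ofReal_sub_mul_I_eq h₁)
    rw [norm_half_smul_sq, hρ, add_zero] at h₀
    exact ⟨rfl, eq_zero_of_norm_ofReal_sub_mul_I_eq h₀, rfl⟩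
  · rintro ⟨rfl, rfl, rfl⟩
    have hρ₀ : 0 ≤ ρ := by nlinarith [sq_nonneg ‖c‖]
    refine ⟨le_rfl, ?_, ?_⟩
    · rw [norm_half_smul_sq, hρ]
      simp [abs_of_nonneg hρ₀]
    · rw [norm_half_smul_sub_sq, im_half_smul_mul_conj, hρ]
      simp [abs_of_nonneg hρ₀]

lemma c₁_re : c₁.re = -2 := by simp [c₁]

lemma c₁_im : c₁.im = -(2 / √3) := by simp [c₁]

lemma sq_norm_c₁ : ‖c₁‖ ^ 2 = 4 * (4 / 3) := by
  rw [Complex.sq_norm, normSq_apply, c₁_re, c₁_im]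
  field_simp
  norm_num

lemma half_smul_c₁ : (2⁻¹ : ℝ) • c₁ = -1 - ((√3 / 3 : ℝ) : ℂ) * I := by
  have h : (2⁻¹ : ℝ) * (2 / √3) = √3 / 3 := by
    field_simp
    norm_num
  rw [real_smul, c₁, mul_sub, ← mul_assoc, ← ofReal_mul, h]
  norm_num

theorem spheres_tangent_at_pAB :
    {p : ℂ × ℝ × ℝ | 0 ≤ p.2.2 ∧
        ‖((‖p.1‖ ^ 2 + p.2.2 : ℝ) : ℂ)
          - (p.2.1 : ℂ) * Complex.I‖ = 4/3 ∧
        ‖((‖p.1 - c₁‖ ^ 2 + p.2.2 : ℝ) : ℂ)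
          - ((p.2.1 + 2 * (p.1 * (starRingEnd ℂ) c₁).im : ℝ) : ℂ) * Complex.I‖ = 4/3}
      = {((-1 : ℂ) - ((Real.sqrt 3 / 3 : ℝ) : ℂ) * Complex.I, (0 : ℝ), (0 : ℝ))} := by
  rw [← half_smul_c₁]
  exact cygan_spheres_inter_eq_singleton sq_norm_c₁
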